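/- Let B > 0, let q be a probability density on ℝ supported in [−B,B], and let p_T be a probability density on ℝ with ∫_ℝ |x| p_T(x) dx < ∞. Then F(α) = −∫_ℝ p_T(x) log H(α,x) dx tends to 0 as α → 1 from the left. -/

import Mathlib

open MeasureTheory Real Filter
open scoped ENNReal Topology

/-- The correction factor `H(α,x) = ∫ ν, exp(-(1/(2α²))((1-α)² ν² - 2(1-α) x ν)) q(ν) dν`. -/
noncomputable def Hfun (q : ℝ → ℝ) (α x : ℝ) : ℝ :=
  ∫ ν : ℝ, Real.exp (-(1 / (2 * α ^ 2)) * ((1 - α) ^ 2 * ν ^ 2 - 2 * (1 - α) * x * ν)) * q ν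

/-! On the support of `q` the exponent defining `H(α, x)` is bounded in absolute value by
`c(α, x) = (1-α)² B² / (2α²) + |1-α| B |x| / α²`, so `H(α, x)`, an average of exponentials
against the probability density `q`, lies in `[e^{-c}, e^{c}]` and `|log H(α, x)| ≤ c(α, x)`.
Integrating against `p_T` gives `|F(α)| ≤ (1-α)² B² / (2α²) + |1-α| B M / α²` with
`M = ∫ |x| p_T(x) dx < ∞`, and this bound tends to `0` as `α → 1`. -/

section Averages

variable {Ω : Type*} [MeasurableSpace Ω] {μ : Measure Ω}

theorem abs_log_integral_exp_mul_le {q E : Ω → ℝ} {c : ℝ} (hq_nonneg : ∀ ν, 0 ≤ q ν)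
    (hq_one : ∫ ν, q ν ∂μ = 1) (hE : AEStronglyMeasurable E μ)
    (hE_le : ∀ ν ∈ Function.support q, |E ν| ≤ c) :
    |Real.log (∫ ν, Real.exp (E ν) * q ν ∂μ)| ≤ c := by
  have hq_int : Integrable q μ := .of_integral_ne_zero (by simp [hq_one])
  have sandwich : ∀ ν, Real.exp (-c) * q ν ≤ Real.exp (E ν) * q ν ∧
      Real.exp (E ν) * q ν ≤ Real.exp c * q ν := by
    intro ν
    by_cases hν : q ν = 0
    · simp [hν]
    · obtain ⟨hlo, hhi⟩ := abs_le.mp (hE_le ν hν)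
      exact ⟨by gcongr; exact hq_nonneg ν, by gcongr; exact hq_nonneg ν⟩
  have hint : Integrable (fun ν => Real.exp (E ν) * q ν) μ := by
    refine (hq_int.const_mul (Real.exp c)).mono
      ((Real.continuous_exp.comp_aestronglyMeasurable hE).mul hq_int.1) (ae_of_all _ fun ν => ?_)
    rw [Real.norm_of_nonneg (mul_nonneg (Real.exp_pos _).le (hq_nonneg ν)),
      Real.norm_of_nonneg (mul_nonneg (Real.exp_pos _).le (hq_nonneg ν))]
    exact (sandwich ν).2
  have hlo : Real.exp (-c) ≤ ∫ ν, Real.exp (E ν) * q ν ∂μ := by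
    simpa [integral_const_mul, hq_one] using
      integral_mono (hq_int.const_mul _) hint fun ν => (sandwich ν).1
  have hhi : ∫ ν, Real.exp (E ν) * q ν ∂μ ≤ Real.exp c := by
    simpa [integral_const_mul, hq_one] using
      integral_mono hint (hq_int.const_mul _) fun ν => (sandwich ν).2
  have hpos := (Real.exp_pos (-c)).trans_le hlo
  exact abs_le.mpr ⟨(Real.le_log_iff_exp_le hpos).mpr hlo, (Real.log_le_iff_le_exp hpos).mpr hhi⟩

theorem abs_integral_mul_le_of_abs_le_affine {p f : ℝ → ℝ} {a b : ℝ} (hp_nonneg : ∀ x, 0 ≤ p x)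
    (hp_one : ∫ x, p x = 1) (hp_mom : Integrable (fun x => |x| * p x))
    (hf : ∀ x, |f x| ≤ a + b * |x|) :
    |∫ x, p x * f x| ≤ a + b * ∫ x, |x| * p x := by
  have hp_int : Integrable p := .of_integral_ne_zero (by simp [hp_one])
  calc |∫ x, p x * f x| ≤ ∫ x, (a * p x + b * (|x| * p x)) := by
        rw [← Real.norm_eq_abs]
        refine norm_integral_le_of_norm_le ((hp_int.const_mul a).add (hp_mom.const_mul b))
          (ae_of_all _ fun x => ?_)
        rw [Real.norm_eq_abs, abs_mul, abs_of_nonneg (hp_nonneg x)]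
        nlinarith [mul_le_mul_of_nonneg_left (hf x) (hp_nonneg x)]
    _ = a + b * ∫ x, |x| * p x := by
        rw [integral_add (hp_int.const_mul a) (hp_mom.const_mul b), integral_const_mul,
          integral_const_mul, hp_one, mul_one]

end Averages

theorem abs_Hfun_exponent_le {B ν : ℝ} (hν : |ν| ≤ B) (α x : ℝ) :
    |-(1 / (2 * α ^ 2)) * ((1 - α) ^ 2 * ν ^ 2 - 2 * (1 - α) * x * ν)| ≤
      (1 - α) ^ 2 * B ^ 2 / (2 * α ^ 2) + |1 - α| * B / α ^ 2 * |x| := by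
  have hν2 : ν ^ 2 ≤ B ^ 2 := sq_le_sq' (abs_le.mp hν).1 (abs_le.mp hν).2
  calc |-(1 / (2 * α ^ 2)) * ((1 - α) ^ 2 * ν ^ 2 - 2 * (1 - α) * x * ν)|
      ≤ 1 / (2 * α ^ 2) * ((1 - α) ^ 2 * ν ^ 2 + 2 * |1 - α| * |x| * |ν|) := by
        rw [abs_mul, abs_neg, abs_of_nonneg (by positivity)]
        gcongr
        refine (abs_sub _ _).trans_eq ?_
        rw [abs_of_nonneg (by positivity), abs_mul, abs_mul, abs_mul, abs_two]
    _ ≤ 1 / (2 * α ^ 2) * ((1 - α) ^ 2 * B ^ 2 + 2 * |1 - α| * |x| * B) := by gcongr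
    _ = (1 - α) ^ 2 * B ^ 2 / (2 * α ^ 2) + |1 - α| * B / α ^ 2 * |x| := by field_simp

theorem abs_log_Hfun_le {B : ℝ} {q : ℝ → ℝ} (hq_nonneg : ∀ x, 0 ≤ q x) (hq_one : ∫ x, q x = 1)
    (hq_supp : Function.support q ⊆ Set.Icc (-B) B) (α x : ℝ) :
    |Real.log (Hfun q α x)| ≤
      (1 - α) ^ 2 * B ^ 2 / (2 * α ^ 2) + |1 - α| * B / α ^ 2 * |x| :=
  abs_log_integral_exp_mul_le hq_nonneg hq_one (by fun_prop)
    fun _ hν => abs_Hfun_exponent_le (abs_le.mpr (hq_supp hν)) α x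

theorem statement10_general (B : ℝ)
    (q : ℝ → ℝ) (hq_nonneg : ∀ x, 0 ≤ q x)
    (hq_one : ∫ x, q x = 1) (hq_supp : Function.support q ⊆ Set.Icc (-B) B)
    (pT : ℝ → ℝ) (hpT_nonneg : ∀ x, 0 ≤ pT x)
    (hpT_one : ∫ x, pT x = 1)
    (hpT_mom : Integrable (fun x => |x| * pT x)) :
    Tendsto (fun α : ℝ => -∫ x : ℝ, pT x * Real.log (Hfun q α x))
      (nhdsWithin 1 (Set.Iio 1)) (nhds 0) := by
  set M := ∫ x, |x| * pT x
  set bound : ℝ → ℝ := fun α => (1 - α) ^ 2 * B ^ 2 / (2 * α ^ 2) + |1 - α| * B / α ^ 2 * M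
  have hbound : Tendsto bound (𝓝 1) (𝓝 0) := by
    have hcont : ContinuousAt bound 1 := by fun_prop (disch := norm_num)
    simpa [bound] using hcont.tendsto
  refine squeeze_zero_norm (fun α => ?_) (hbound.mono_left nhdsWithin_le_nhds)
  rw [norm_neg, Real.norm_eq_abs]
  exact abs_integral_mul_le_of_abs_le_affine hpT_nonneg hpT_one hpT_mom
    (abs_log_Hfun_le hq_nonneg hq_one hq_supp α)

/-- If `q` is a probability density supported in `[-B,B]` and `p_T` is a probability density
with finite first absolute moment, then `F(α) = -∫ p_T(x) log H(α,x) dx` tends to `0` as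
`α → 1` from the left. -/
theorem statement10 (B : ℝ) (hB : 0 < B)
    (q : ℝ → ℝ) (hq_meas : Measurable q) (hq_nonneg : ∀ x, 0 ≤ q x)
    (hq_one : ∫ x, q x = 1) (hq_supp : Function.support q ⊆ Set.Icc (-B) B)
    (pT : ℝ → ℝ) (hpT_meas : Measurable pT) (hpT_nonneg : ∀ x, 0 ≤ pT x)
    (hpT_one : ∫ x, pT x = 1)
    (hpT_mom : Integrable (fun x => |x| * pT x)) :
    Tendsto (fun α : ℝ => -∫ x : ℝ, pT x * Real.log (Hfun q α x))
      (nhdsWithin 1 (Set.Iio 1)) (nhds 0) :=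
  statement10_general B q hq_nonneg hq_one hq_supp pT hpT_nonneg hpT_one hpT_mom
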